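/- arXiv:1804.02840 — 14 statements merged into one kernel-verified Lean document; each statement's English description precedes it below -/
import Mathlib

section
/- Let U be a set. The conditional independence relation between equivalence relations on U satisfies: (C1) P₁ ⊥ P₂ | P₂ for all P₁, P₂; (C2) P₁ ⊥ P₂ | P implies P₂ ⊥ P₁ | P; (C3) if P₁ ⊥ P₂ | P and Q is coarser than P₂ (i.e. u ≡_{P₂} v implies u ≡_Q v for all u, v), then P₁ ⊥ Q | P; (C4) P₁ ⊥ P₂ | P implies P₁ ⊥ (P₂ ∨ P) | P, where P₂ ∨ P is the common refinement of P₂ and P (the equivalence relation: u ≡ v iff u ≡_{P₂} v and u ≡_P v). -/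
/-- Conditional independence of the equivalence relations `P₁` and `P₂` given `P`:
whenever `u ≡_P u'`, there is `v` with `u ≡_{P₁} v`, `u ≡_P v` and `u' ≡_{P₂} v`. -/
def CondIndep {U : Type*} (P₁ P₂ P : U → U → Prop) : Prop :=
  ∀ u u', P u u' → ∃ v, P₁ u v ∧ P u v ∧ P₂ u' v

theorem condIndep_qseparoid {U : Type*} :
    -- C1
    (∀ P₁ P₂ : U → U → Prop, Equivalence P₁ → Equivalence P₂ →
      CondIndep P₁ P₂ P₂) ∧
    -- C2
    (∀ P₁ P₂ P : U → U → Prop, Equivalence P₁ → Equivalence P₂ → Equivalence P →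
      CondIndep P₁ P₂ P → CondIndep P₂ P₁ P) ∧
    -- C3
    (∀ P₁ P₂ P Q : U → U → Prop,
      Equivalence P₁ → Equivalence P₂ → Equivalence P → Equivalence Q →
      CondIndep P₁ P₂ P → (∀ u v, P₂ u v → Q u v) → CondIndep P₁ Q P) ∧
    -- C4
    (∀ P₁ P₂ P : U → U → Prop, Equivalence P₁ → Equivalence P₂ → Equivalence P →
      CondIndep P₁ P₂ P → CondIndep P₁ (fun u v => P₂ u v ∧ P u v) P) := by
  refine ⟨?_, ?_, ?_, ?_⟩
  · intro P₁ P₂ h₁ h₂ u u' h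
    exact ⟨u, h₁.refl u, h₂.refl u, h₂.symm h⟩
  · intro P₁ P₂ P h₁ h₂ hP h u u' hu
    obtain ⟨v, hv₁, hvP, hv₂⟩ := h u' u (hP.symm hu)
    exact ⟨v, hv₂, hP.trans hu hvP, hv₁⟩
  · intro P₁ P₂ P Q h₁ h₂ hP hQ h hc u u' hu
    obtain ⟨v, hv₁, hvP, hv₂⟩ := h u u' hu
    exact ⟨v, hv₁, hvP, hc _ _ hv₂⟩
  · intro P₁ P₂ P h₁ h₂ hP h u u' hu
    obtain ⟨v, hv₁, hvP, hv₂⟩ := h u u' hu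
    exact ⟨v, hv₁, hvP, hv₂, hP.trans (hP.symm hu) hvP⟩
end

section
/- Let U be a set and P₁, P₂, P equivalence relations on U with P₁ ⊥ P₂ | P. If X, Y ⊆ U satisfy σ_{P₁}(X) = X and σ_{P₂}(Y) = Y, then σ_P(X ∩ Y) = σ_P(X) ∩ σ_P(Y) (the combination property). -/
/-- Saturation of a set `X` with respect to an equivalence relation `r`. -/
def saturate {U : Type*} (r : U → U → Prop) (X : Set U) : Set U :=
  {u | ∃ u' ∈ X, r u u'}

/-- The combination property of set algebras. -/
theorem combination_property {U : Type*} (P₁ P₂ P : U → U → Prop)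
    (h₁ : Equivalence P₁) (h₂ : Equivalence P₂) (h : Equivalence P)
    (hci : CondIndep P₁ P₂ P) (X Y : Set U)
    (hX : saturate P₁ X = X) (hY : saturate P₂ Y = Y) :
    saturate P (X ∩ Y) = saturate P X ∩ saturate P Y := by
  ext u
  constructor
  · rintro ⟨w, ⟨hwX, hwY⟩, hw⟩
    exact ⟨⟨w, hwX, hw⟩, ⟨w, hwY, hw⟩⟩
  · rintro ⟨⟨x, hx, hux⟩, ⟨y, hy, huy⟩⟩
    have hxy : P x y := h.trans (h.symm hux) huy
    obtain ⟨v, h1v, hpv, h2v⟩ := hci x y hxy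
    have hvX : v ∈ X := hX ▸ ⟨x, hx, h₁.symm h1v⟩
    have hvY : v ∈ Y := hY ▸ ⟨y, hy, h₂.symm h2v⟩
    exact ⟨v, ⟨hvX, hvY⟩, h.trans hux hpv⟩
end

section
/- Let U be a set and P₁, P₂, P equivalence relations on U with P₁ ⊥ P₂ | P. If X ⊆ U satisfies σ_{P₁}(X) = X, then σ_{P₂}(X) = σ_{P₂}(σ_P(X)) (the extraction property). -/
/-- The extraction property of set algebras. -/
theorem extraction_property {U : Type*} (P₁ P₂ P : U → U → Prop)
    (h₁ : Equivalence P₁) (h₂ : Equivalence P₂) (h : Equivalence P)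
    (hci : CondIndep P₁ P₂ P) (X : Set U)
    (hX : saturate P₁ X = X) :
    saturate P₂ X = saturate P₂ (saturate P X) := by
  ext u
  constructor
  · rintro ⟨x, hx, hux⟩
    exact ⟨x, ⟨x, hx, h.refl x⟩, hux⟩
  · rintro ⟨w, ⟨x, hx, hwx⟩, huw⟩
    obtain ⟨v, hxv, hPxv, hwv⟩ := hci x w (h.symm hwx)
    have hvX : v ∈ X := by
      rw [← hX]; exact ⟨x, hx, h₁.symm hxv⟩
    exact ⟨v, hvX, h₂.trans huw hwv⟩
end

section
/- Let Ψ be a join-semilattice with greatest element ⊤ and let ε : Ψ → Ψ be an existential quantifier. For an ideal I of Ψ (a nonempty, downward-closed subset closed under binary joins) define ε̄(I) = {φ ∈ Ψ : ∃ ψ ∈ I, φ ≤ ε(ψ)}. Then for any two ideals I, J of Ψ: ε̄(I) = ε̄(J) if and only if I ∩ ε(Ψ) = J ∩ ε(Ψ), where ε(Ψ) denotes the image of ε. -/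
/-- An ideal of a join-semilattice: a nonempty, downward-closed subset
closed under binary joins. -/
def IsIdealSet {Ψ : Type*} [SemilatticeSup Ψ] (I : Set Ψ) : Prop :=
  I.Nonempty ∧ (∀ φ ∈ I, ∀ ψ : Ψ, ψ ≤ φ → ψ ∈ I) ∧ ∀ φ ∈ I, ∀ ψ ∈ I, φ ⊔ ψ ∈ I

theorem extraction_of_ideals {Ψ : Type*} [SemilatticeSup Ψ] [OrderTop Ψ]
    (ε : Ψ → Ψ)
    (hE1 : ε ⊤ = ⊤)
    (hE2 : ∀ ψ : Ψ, ε ψ ≤ ψ)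
    (hE3 : ∀ φ ψ : Ψ, ε (ε φ ⊔ ψ) = ε φ ⊔ ε ψ)
    (I J : Set Ψ) (hI : IsIdealSet I) (hJ : IsIdealSet J) :
    {φ : Ψ | ∃ ψ ∈ I, φ ≤ ε ψ} = {φ : Ψ | ∃ ψ ∈ J, φ ≤ ε ψ} ↔
      I ∩ Set.range ε = J ∩ Set.range ε := by
  have hidem : ∀ φ : Ψ, ε (ε φ) = ε φ := by
    intro φ
    have h := hE3 φ (ε φ)
    rw [sup_idem] at h
    have h1 : ε φ ≤ ε (ε φ) := by rw [h]; exact le_sup_left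
    exact le_antisymm (hE2 _) h1
  constructor
  · intro h
    -- from ε̄(I) = ε̄(J) deduce I ∩ range ε = J ∩ range ε
    have key : ∀ (A B : Set Ψ), IsIdealSet B →
        {φ : Ψ | ∃ ψ ∈ A, φ ≤ ε ψ} = {φ : Ψ | ∃ ψ ∈ B, φ ≤ ε ψ} →
        A ∩ Set.range ε ⊆ B ∩ Set.range ε := by
      intro A B hB hAB x ⟨hxA, y, hy⟩
      have hx : ε x = x := by rw [← hy, hidem]
      have : x ∈ {φ : Ψ | ∃ ψ ∈ A, φ ≤ ε ψ} := ⟨x, hxA, hx.ge⟩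
      rw [hAB] at this
      obtain ⟨ψ, hψB, hle⟩ := this
      exact ⟨hB.2.1 ψ hψB x (hle.trans (hE2 ψ)), y, hy⟩
    exact le_antisymm (key I J hJ h) (key J I hI h.symm)
  · intro h
    have key : ∀ (A B : Set Ψ), IsIdealSet A →
        A ∩ Set.range ε ⊆ B ∩ Set.range ε →
        {φ : Ψ | ∃ ψ ∈ A, φ ≤ ε ψ} ⊆ {φ : Ψ | ∃ ψ ∈ B, φ ≤ ε ψ} := by
      intro A B hA hAB φ ⟨ψ, hψA, hle⟩
      have hεA : ε ψ ∈ A := hA.2.1 ψ hψA (ε ψ) (hE2 ψ)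
      obtain ⟨hεB, -⟩ := hAB ⟨hεA, ψ, rfl⟩
      exact ⟨ε ψ, hεB, by rw [hidem]; exact hle⟩
    exact le_antisymm (key I J hI h.le) (key J I hJ h.ge)
end

section
/- Let Ψ be a join-semilattice with greatest element ⊤, ε : Ψ → Ψ an existential quantifier, and X ⊆ Ψ a set satisfying the strong order-generation condition: whenever α ∈ X and ψ ∈ Ψ with ε(ψ) ≤ ε(α), there exists γ ∈ X with ε(γ) = ε(α) and ψ ≤ γ. Then for every ψ ∈ Ψ: {α ∈ X : ε(ψ) ≤ α} = {α ∈ X : ∃ β ∈ X, ε(β) = ε(α) and ψ ≤ β}. (That is, the upset of ε(ψ) in X equals the saturation, with respect to the partition of X induced by α ≡ β iff ε(α) = ε(β), of the upset of ψ in X.) -/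
theorem strongly_orderGenerating_saturation {Ψ : Type*} [SemilatticeSup Ψ] [OrderTop Ψ]
    (ε : Ψ → Ψ)
    (hE1 : ε ⊤ = ⊤)
    (hE2 : ∀ ψ : Ψ, ε ψ ≤ ψ)
    (hE3 : ∀ φ ψ : Ψ, ε (ε φ ⊔ ψ) = ε φ ⊔ ε ψ)
    (X : Set Ψ)
    (hstrong : ∀ α ∈ X, ∀ ψ : Ψ, ε ψ ≤ ε α → ∃ γ ∈ X, ε γ = ε α ∧ ψ ≤ γ) :
    ∀ ψ : Ψ, {α ∈ X | ε ψ ≤ α} = {α ∈ X | ∃ β ∈ X, ε β = ε α ∧ ψ ≤ β} := by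
  have hmono : ∀ x y : Ψ, x ≤ y → ε x ≤ ε y := by
    intro x y hxy
    have h1 : ε x ⊔ y = y := sup_eq_right.mpr ((hE2 x).trans hxy)
    have h2 := hE3 x y
    rw [h1] at h2
    exact le_sup_left.trans h2.ge
  intro ψ
  ext α
  simp only [Set.mem_setOf_eq]
  constructor
  · rintro ⟨hαX, hψα⟩
    refine ⟨hαX, ?_⟩
    have hle : ε ψ ≤ ε α := by
      have h1 : ε ψ ⊔ α = α := sup_eq_right.mpr hψα
      have h2 := hE3 ψ α
      rw [h1] at h2
      exact le_sup_left.trans h2.ge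
    exact hstrong α hαX ψ hle
  · rintro ⟨hαX, β, hβX, hεβα, hψβ⟩
    exact ⟨hαX, ((hmono _ _ hψβ).trans_eq hεβα).trans (hE2 α)⟩
end

section
/- Let (D, ≤, ∨) be a join-semilattice, Ψ a join-semilattice with least element ⊥ and greatest element ⊤, and ε : D → (Ψ → Ψ) a family of maps satisfying: (E1) ε_x(⊤) = ⊤; (E2) ε_x(ψ) ≤ ψ; (E3) ε_x(ε_x(φ) ⊔ ψ) = ε_x(φ) ⊔ ε_x(ψ); (E4) for every ψ there is x with ε_x(ψ) = ψ; (E5) if ε_x(ψ) = ψ and x ≤ y then ε_y(ψ) = ψ. Let ⊥̇ be a ternary relation x ⊥̇ y | z on D satisfying the quasi-separoid axioms C1–C4, and assume the combination property (if x ⊥̇ y | z, ε_x(φ) = φ and ε_y(ψ) = ψ, then ε_z(φ ⊔ ψ) = ε_z(φ) ⊔ ε_z(ψ)) and the extraction property (if x ⊥̇ y | z and ε_x(φ) = φ, then ε_y(φ) = ε_y(ε_z(φ))). Then x ⊥̇ y | z implies: for all φ, ψ ∈ Ψ with ε_z(φ) = ε_z(ψ), there exists χ ∈ Ψ such that ε_{x∨z}(χ)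 = ε_{x∨z}(φ) and ε_{y∨z}(χ) = ε_{y∨z}(ψ). -/
theorem condIndep_exists_common_extension {D : Type*} [SemilatticeSup D]
    {Ψ : Type*} [SemilatticeSup Ψ] [BoundedOrder Ψ]
    (ε : D → Ψ → Ψ)
    (hE1 : ∀ x : D, ε x ⊤ = ⊤)
    (hE2 : ∀ (x : D) (ψ : Ψ), ε x ψ ≤ ψ)
    (hE3 : ∀ (x : D) (φ ψ : Ψ), ε x (ε x φ ⊔ ψ) = ε x φ ⊔ ε x ψ)
    (hE4 : ∀ ψ : Ψ, ∃ x : D, ε x ψ = ψ)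
    (hE5 : ∀ (x y : D) (ψ : Ψ), ε x ψ = ψ → x ≤ y → ε y ψ = ψ)
    (ci : D → D → D → Prop)
    (hC1 : ∀ x y : D, ci x y y)
    (hC2 : ∀ x y z : D, ci x y z → ci y x z)
    (hC3 : ∀ x y z w : D, ci x y z → w ≤ y → ci x w z)
    (hC4 : ∀ x y z : D, ci x y z → ci x (y ⊔ z) z)
    (hcomb : ∀ (x y z : D) (φ ψ : Ψ), ci x y z → ε x φ = φ → ε y ψ = ψ →
      ε z (φ ⊔ ψ) = ε z φ ⊔ ε z ψ)
    (hextr : ∀ (x y z : D) (φ : Ψ), ci x y z → ε x φ = φ →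
      ε y φ = ε y (ε z φ))
    (x y z : D) (h : ci x y z) :
    ∀ φ ψ : Ψ, ε z φ = ε z ψ →
      ∃ χ : Ψ, ε (x ⊔ z) χ = ε (x ⊔ z) φ ∧ ε (y ⊔ z) χ = ε (y ⊔ z) ψ := by
  intro φ ψ hzeq
  have idem : ∀ (w : D) (χ : Ψ), ε w (ε w χ) = ε w χ := by
    intro w χ
    have h3 := hE3 w χ (ε w χ)
    rw [sup_idem] at h3
    exact le_antisymm (hE2 w (ε w χ)) (h3 ▸ le_sup_left)
  have cons : ∀ (z' w : D) (χ : Ψ), z' ≤ w → ε z' χ = ε z' (ε w χ) := by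
    intro z' w χ hle
    obtain ⟨s, hs⟩ := hE4 χ
    exact hextr s z' w χ (hC3 s w w z' (hC1 s w) hle) hs
  have hxz : ci (x ⊔ z) (y ⊔ z) z :=
    hC2 _ _ _ (hC4 _ _ _ (hC2 _ _ _ (hC4 _ _ _ h)))
  have hyz : ci (y ⊔ z) (x ⊔ z) z := hC2 _ _ _ hxz
  set a := ε (x ⊔ z) φ with ha
  set b := ε (y ⊔ z) ψ with hb
  have hza : ε z a = ε z φ := (cons z (x ⊔ z) φ le_sup_right).symm
  have hzb : ε z b = ε z ψ := (cons z (y ⊔ z) ψ le_sup_right).symm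
  -- ε_{x⊔z} b = ε_z b
  have hxb : ε (x ⊔ z) b = ε z b := by
    have h1 : ε (x ⊔ z) b = ε (x ⊔ z) (ε z b) :=
      hextr (y ⊔ z) (x ⊔ z) z b hyz (idem _ _)
    have h2 : ε (x ⊔ z) (ε z b) = ε z b :=
      hE5 z (x ⊔ z) (ε z b) (idem _ _) le_sup_right
    rw [h1, h2]
  have hya : ε (y ⊔ z) a = ε z a := by
    have h1 : ε (y ⊔ z) a = ε (y ⊔ z) (ε z a) :=
      hextr (x ⊔ z) (y ⊔ z) z a hxz (idem _ _)
    have h2 : ε (y ⊔ z) (ε z a) = ε z a :=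
      hE5 z (y ⊔ z) (ε z a) (idem _ _) le_sup_right
    rw [h1, h2]
  refine ⟨a ⊔ b, ?_, ?_⟩
  · have h3 := hE3 (x ⊔ z) φ b
    rw [← ha] at h3
    rw [h3, hxb, hzb, ← hzeq, ← hza]
    exact sup_eq_left.mpr (hE2 z a)
  · have h3 := hE3 (y ⊔ z) ψ a
    rw [← hb] at h3
    rw [sup_comm a b, h3, hya, hza, hzeq, ← hzb]
    exact sup_eq_left.mpr (hE2 z b)
end

section
/- Let Ψ be a join-semilattice with greatest element ⊤ and ε : Ψ → Ψ an existential quantifier. Call α ∈ Ψ an atom if α ≠ ⊤ and for all ψ, α ≤ ψ implies ψ = α or ψ = ⊤; assume Ψ is atomic, i.e. for every ψ ≠ ⊤ there is an atom α with ψ ≤ α. If α is an atom and ψ ∈ Ψ satisfies ε(ψ) ≤ ε(α), then there exists an atom β such that ψ ≤ β and ε(β) = ε(α). -/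
/-- An atom in the information order: a maximal element different from the
top element `⊤` (which represents the contradictory information `0`). -/
def IsInfoAtom {Ψ : Type*} [Preorder Ψ] [OrderTop Ψ] (α : Ψ) : Prop :=
  α ≠ ⊤ ∧ ∀ ψ : Ψ, α ≤ ψ → ψ = α ∨ ψ = ⊤

theorem atoms_strongly_orderGenerating {Ψ : Type*} [SemilatticeSup Ψ] [OrderTop Ψ]
    (ε : Ψ → Ψ)
    (hE1 : ε ⊤ = ⊤)
    (hE2 : ∀ ψ : Ψ, ε ψ ≤ ψ)
    (hE3 : ∀ φ ψ : Ψ, ε (ε φ ⊔ ψ) = ε φ ⊔ ε ψ)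
    (hatomic : ∀ ψ : Ψ, ψ ≠ ⊤ → ∃ α : Ψ, IsInfoAtom α ∧ ψ ≤ α)
    (α ψ : Ψ) (hα : IsInfoAtom α) (h : ε ψ ≤ ε α) :
    ∃ β : Ψ, IsInfoAtom β ∧ ψ ≤ β ∧ ε β = ε α := by
  -- ε is monotone
  have hmono : ∀ a b : Ψ, a ≤ b → ε a ≤ ε b := by
    intro a b hab
    have h1 : ε a ⊔ b = b := sup_eq_right.mpr ((hE2 a).trans hab)
    have := hE3 a b
    rw [h1] at this
    calc ε a ≤ ε a ⊔ ε b := le_sup_left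
      _ = ε b := this.symm
  set φ := ε α ⊔ ψ with hφ
  have hεφ : ε φ = ε α := by
    rw [hφ, hE3, sup_eq_left.mpr h]
  have hφtop : φ ≠ ⊤ := by
    intro htop
    have : ε α = ⊤ := by rw [← hεφ, htop, hE1]
    exact hα.1 (top_le_iff.mp (this ▸ hE2 α))
  obtain ⟨β, hβ, hφβ⟩ := hatomic φ hφtop
  refine ⟨β, hβ, le_trans le_sup_right hφβ, ?_⟩
  have hεαβ : ε α ≤ ε β := hεφ ▸ hmono φ β hφβ
  have hεαleβ : ε α ≤ β := le_trans le_sup_left hφβ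
  rcases hα.2 (ε β ⊔ α) le_sup_right with hcase | hcase
  · -- ε β ⊔ α = α
    have := hE3 β α
    rw [hcase] at this
    have hle : ε β ≤ ε α := by
      calc ε β ≤ ε β ⊔ ε α := le_sup_left
        _ = ε α := this.symm
    exact le_antisymm hle hεαβ
  · -- ε β ⊔ α = ⊤, contradiction
    exfalso
    have : ε (ε β ⊔ α) = ⊤ := by rw [hcase, hE1]
    rw [hE3] at this
    have hβtop : (⊤ : Ψ) ≤ β := by
      rw [← this]
      exact sup_le (hE2 β) hεαleβ
    exact hβ.1 (top_le_iff.mp hβtop)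
end

section
/- Let Ψ be a finite bounded distributive lattice and ε : Ψ → Ψ a map satisfying ε(⊤) = ⊤, ε(ψ) ≤ ψ, ε(ε(φ) ⊔ ψ) = ε(φ) ⊔ ε(ψ), and ε(φ ⊓ ψ) = ε(φ) ⊓ ε(ψ). If χ is a meet-irreducible element of Ψ and φ ∈ Ψ satisfies ε(φ) ≤ ε(χ), then there exists a meet-irreducible element λ of Ψ such that φ ≤ λ and ε(λ) = ε(χ). -/
/-!
Among the elements `ψ ≥ φ` with `ε ψ = ε χ` (nonempty: `φ ⊔ ε χ` is one) take a maximal `λ`.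
In a distributive lattice meet-irreducible elements are meet-prime, so from
`ε μ ⊓ ε ν = ε χ ≤ χ` one of `ε μ`, `ε ν` lies below `χ`, hence (by monotonicity and
idempotence of `ε`) equals `ε χ`. Thus a splitting `λ = μ ⊓ ν` has a factor in the same
family above `λ`, which by maximality is `λ` itself.
-/

/-- A meet-irreducible element of a lattice with top: an element `χ ≠ ⊤`
such that `χ = μ ⊓ ν` implies `χ = μ` or `χ = ν`. -/
def MeetIrred {Ψ : Type*} [Lattice Ψ] [OrderTop Ψ] (χ : Ψ) : Prop :=
  χ ≠ ⊤ ∧ ∀ μ ν : Ψ, χ = μ ⊓ ν → χ = μ ∨ χ = ν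

theorem meetIrred_iff_infIrred {Ψ : Type*} [Lattice Ψ] [OrderTop Ψ] {χ : Ψ} :
    MeetIrred χ ↔ InfIrred χ :=
  and_congr not_isMax_iff_ne_top.symm
    ⟨fun h _ _ e => (h _ _ e.symm).imp Eq.symm Eq.symm,
      fun h _ _ e => (h e.symm).imp Eq.symm Eq.symm⟩

section Quantifier

variable {Ψ : Type*} {ε : Ψ → Ψ}

theorem monotone_of_map_inf [SemilatticeInf Ψ] (hinf : ∀ φ ψ, ε (φ ⊓ ψ) = ε φ ⊓ ε ψ) :
    Monotone ε := fun a b hab =>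
  calc ε a = ε (a ⊓ b) := by rw [inf_eq_left.2 hab]
    _ = ε a ⊓ ε b := hinf a b
    _ ≤ ε b := inf_le_right

theorem map_map_of_map_sup [SemilatticeSup Ψ] (hle : ∀ ψ, ε ψ ≤ ψ)
    (hsup : ∀ φ ψ, ε (ε φ ⊔ ψ) = ε φ ⊔ ε ψ) (a : Ψ) : ε (ε a) = ε a :=
  (hle _).antisymm <| by simpa only [sup_idem] using (hsup a (ε a)).ge.trans' le_sup_left

theorem map_sup_map_of_map_le [SemilatticeSup Ψ] (hsup : ∀ φ ψ, ε (ε φ ⊔ ψ) = ε φ ⊔ ε ψ)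
    {φ χ : Ψ} (h : ε φ ≤ ε χ) : ε (φ ⊔ ε χ) = ε χ := by
  rw [sup_comm, hsup, sup_eq_left.2 h]

theorem InfPrime.map_eq_or_map_eq_of_map_inf_map_eq [Lattice Ψ] (hle : ∀ ψ, ε ψ ≤ ψ)
    (hsup : ∀ φ ψ, ε (ε φ ⊔ ψ) = ε φ ⊔ ε ψ) (hinf : ∀ φ ψ, ε (φ ⊓ ψ) = ε φ ⊓ ε ψ)
    {χ : Ψ} (hχ : InfPrime χ) {μ ν : Ψ} (h : ε μ ⊓ ε ν = ε χ) : ε μ = ε χ ∨ ε ν = ε χ := by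
  have le_map_of_le {α : Ψ} (hα : ε α ≤ χ) : ε α ≤ ε χ :=
    map_map_of_map_sup hle hsup α ▸ monotone_of_map_inf hinf hα
  rcases hχ.2 (h.trans_le (hle χ)) with hμ | hν
  · exact .inl ((le_map_of_le hμ).antisymm (h ▸ inf_le_left))
  · exact .inr ((le_map_of_le hν).antisymm (h ▸ inf_le_right))

theorem infIrred_of_maximal [Lattice Ψ] [OrderTop Ψ] (htop : ε ⊤ = ⊤)
    (hinf : ∀ φ ψ, ε (φ ⊓ ψ) = ε φ ⊓ ε ψ) {c : Ψ} (hc : c ≠ ⊤)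
    (hprime : ∀ μ ν, ε μ ⊓ ε ν = c → ε μ = c ∨ ε ν = c) {φ lam : Ψ}
    (hlam : Maximal (fun ψ => φ ≤ ψ ∧ ε ψ = c) lam) : InfIrred lam := by
  obtain ⟨hφ, hc'⟩ := hlam.prop
  refine ⟨not_isMax_iff_ne_top.2 ?_, fun μ ν hμν => ?_⟩
  · rintro rfl
    exact hc (hc' ▸ htop)
  have hle_μ : lam ≤ μ := hμν ▸ inf_le_left
  have hle_ν : lam ≤ ν := hμν ▸ inf_le_right
  rcases hprime μ ν (by rw [← hinf, hμν, hc']) with hμ | hν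
  · exact .inl (hlam.eq_of_ge ⟨hφ.trans hle_μ, hμ⟩ hle_μ)
  · exact .inr (hlam.eq_of_ge ⟨hφ.trans hle_ν, hν⟩ hle_ν)

end Quantifier

theorem meetIrred_strongly_orderGenerating {Ψ : Type*} [DistribLattice Ψ]
    [BoundedOrder Ψ] [Fintype Ψ]
    (ε : Ψ → Ψ)
    (hE1 : ε ⊤ = ⊤)
    (hE2 : ∀ ψ : Ψ, ε ψ ≤ ψ)
    (hE3 : ∀ φ ψ : Ψ, ε (ε φ ⊔ ψ) = ε φ ⊔ ε ψ)
    (hE4 : ∀ φ ψ : Ψ, ε (φ ⊓ ψ) = ε φ ⊓ ε ψ)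
    (χ : Ψ) (hχ : MeetIrred χ) (φ : Ψ) (h : ε φ ≤ ε χ) :
    ∃ lam : Ψ, MeetIrred lam ∧ φ ≤ lam ∧ ε lam = ε χ := by
  have hχ_prime : InfPrime χ := (meetIrred_iff_infIrred.1 hχ).infPrime
  have hεχ : ε χ ≠ ⊤ := ne_top_of_le_ne_top hχ.1 (hE2 χ)
  obtain ⟨lam, -, hlam⟩ := Finite.exists_le_maximal (p := fun ψ => φ ≤ ψ ∧ ε ψ = ε χ)
    (a := φ ⊔ ε χ) ⟨le_sup_left, map_sup_map_of_map_le hE3 h⟩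
  have hlam_irred : InfIrred lam := infIrred_of_maximal hE1 hE4 hεχ
    (fun _ _ => hχ_prime.map_eq_or_map_eq_of_map_inf_map_eq hE2 hE3 hE4) hlam
  exact ⟨lam, meetIrred_iff_infIrred.2 hlam_irred, hlam.prop⟩
end

section
/- Let Ψ be a bounded distributive lattice and ε : Ψ → Ψ a distributive-lattice existential quantifier. If P and Q are prime ideals of Ψ with Q ∩ Fix(ε) ⊆ P ∩ Fix(ε), then there exists a prime ideal R of Ψ such that R ∩ Fix(ε) = P ∩ Fix(ε) and Q ⊆ R. -/
/-- A prime ideal: a proper ideal `I` such that `φ ⊓ ψ ∈ I` implies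
`φ ∈ I` or `ψ ∈ I`. -/
def IsPrimeIdealSet {Ψ : Type*} [Lattice Ψ] (I : Set Ψ) : Prop :=
  IsIdealSet I ∧ I ≠ Set.univ ∧ ∀ φ ψ : Ψ, φ ⊓ ψ ∈ I → φ ∈ I ∨ ψ ∈ I

theorem cignoli_lemma_one {Ψ : Type*} [DistribLattice Ψ] [BoundedOrder Ψ]
    (ε : Ψ → Ψ)
    (hE1 : ε ⊤ = ⊤)
    (hE2 : ∀ ψ : Ψ, ε ψ ≤ ψ)
    (hE3 : ∀ φ ψ : Ψ, ε (ε φ ⊔ ψ) = ε φ ⊔ ε ψ)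
    (hE4 : ∀ φ ψ : Ψ, ε (φ ⊓ ψ) = ε φ ⊓ ε ψ)
    (P Q : Set Ψ) (hP : IsPrimeIdealSet P) (hQ : IsPrimeIdealSet Q)
    (h : Q ∩ {ψ : Ψ | ε ψ = ψ} ⊆ P ∩ {ψ : Ψ | ε ψ = ψ}) :
    ∃ R : Set Ψ, IsPrimeIdealSet R ∧
      R ∩ {ψ : Ψ | ε ψ = ψ} = P ∩ {ψ : Ψ | ε ψ = ψ} ∧ Q ⊆ R := by
  obtain ⟨⟨hPne, hPlow, hPsup⟩, hPprop, hPpr⟩ := hP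
  obtain ⟨⟨hQne, hQlow, hQsup⟩, hQprop, hQpr⟩ := hQ
  set Fix : Set Ψ := {ψ : Ψ | ε ψ = ψ} with hFix
  -- basic facts about ε
  have hmono : ∀ φ ψ : Ψ, φ ≤ ψ → ε φ ≤ ε ψ := by
    intro φ ψ hle
    have : ε (φ ⊓ ψ) = ε φ ⊓ ε ψ := hE4 φ ψ
    rw [inf_eq_left.mpr hle] at this
    exact le_of_eq_of_le this inf_le_right
  have hbot : ε (⊥ : Ψ) = ⊥ := le_antisymm (hE2 ⊥) bot_le
  have hidem : ∀ φ : Ψ, ε (ε φ) = ε φ := by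
    intro φ
    simpa [hbot] using hE3 φ ⊥
  have hfixsup : ∀ p q : Ψ, p ∈ Fix → q ∈ Fix → p ⊔ q ∈ Fix := by
    intro p q hp hq
    have hp' : ε p = p := hp
    have hq' : ε q = q := hq
    have := hE3 p q
    rw [hp', hq'] at this
    exact this
  have hfixinf : ∀ p q : Ψ, p ∈ Fix → q ∈ Fix → p ⊓ q ∈ Fix := by
    intro p q hp hq
    simp only [hFix, Set.mem_setOf_eq] at *
    rw [hE4, hp, hq]
  have hbotP : (⊥ : Ψ) ∈ P := by
    obtain ⟨x, hx⟩ := hPne; exact hPlow x hx ⊥ bot_le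
  have hbotQ : (⊥ : Ψ) ∈ Q := by
    obtain ⟨x, hx⟩ := hQne; exact hQlow x hx ⊥ bot_le
  have htopP : (⊤ : Ψ) ∉ P := by
    intro ht
    exact hPprop (Set.eq_univ_of_forall fun x => hPlow ⊤ ht x le_top)
  -- the ideal generated by Q ∪ (P ∩ Fix)
  set Iset : Set Ψ := {x : Ψ | ∃ q ∈ Q, ∃ p ∈ P ∩ Fix, x ≤ q ⊔ p} with hIset
  have hIideal : Order.IsIdeal Iset := by
    refine ⟨?_, ⟨⊥, ⊥, hbotQ, ⊥, ⟨hbotP, hbot⟩, by simp⟩, ?_⟩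
    · intro a b hba ⟨q, hq, p, hp, hle⟩
      exact ⟨q, hq, p, hp, le_trans hba hle⟩
    · rintro x ⟨q, hq, p, hp, hle⟩ y ⟨q', hq', p', hp', hle'⟩
      refine ⟨(q ⊔ q') ⊔ (p ⊔ p'), ⟨q ⊔ q', hQsup q hq q' hq', p ⊔ p',
        ⟨hPsup p hp.1 p' hp'.1, hfixsup p p' hp.2 hp'.2⟩, le_rfl⟩, ?_, ?_⟩
      · exact le_trans hle (sup_le_sup le_sup_left le_sup_left)
      · exact le_trans hle' (sup_le_sup le_sup_right le_sup_right)
  -- the filter generated by Fix \ P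
  set Gset : Set Ψ := {x : Ψ | ∃ f ∈ Fix \ P, f ≤ x} with hGset
  have hGfilter : Order.IsPFilter Gset := by
    refine Order.IsPFilter.of_def ⟨⊤, ⊤, ⟨hE1, htopP⟩, le_rfl⟩ ?_ ?_
    · rintro x ⟨f, hf, hfx⟩ y ⟨g, hg, hgy⟩
      have hfg : f ⊓ g ∈ Fix \ P := by
        refine ⟨hfixinf f g hf.1 hg.1, fun hmem => ?_⟩
        rcases hPpr f g hmem with h1 | h1
        · exact hf.2 h1
        · exact hg.2 h1
      exact ⟨f ⊓ g, ⟨f ⊓ g, hfg, le_rfl⟩, le_trans inf_le_left hfx,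
        le_trans inf_le_right hgy⟩
    · rintro x y hxy ⟨f, hf, hfx⟩
      exact ⟨f, hf, le_trans hfx hxy⟩
  -- disjointness
  have hdisj : Disjoint (Gset : Set Ψ) (Iset : Set Ψ) := by
    rw [Set.disjoint_left]
    rintro x ⟨f, hf, hfx⟩ ⟨q, hq, p, hp, hle⟩
    have hεq : ε q ∈ Q ∩ Fix := ⟨hQlow q hq (ε q) (hE2 q), hidem q⟩
    have hεqP : ε q ∈ P := (h hεq).1
    have hfle : f ≤ p ⊔ ε q := by
      calc f = ε f := hf.1.symm
        _ ≤ ε (x) := hmono f x hfx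
        _ ≤ ε (q ⊔ p) := hmono x _ hle
        _ = ε (ε p ⊔ q) := by rw [hp.2, sup_comm]
        _ = ε p ⊔ ε q := hE3 p q
        _ = p ⊔ ε q := by rw [hp.2]
    exact hf.2 (hPlow (p ⊔ ε q) (hPsup p hp.1 (ε q) hεqP) f hfle)
  -- apply the prime separation theorem
  obtain ⟨J, hJprime, hIJ, hJdisj⟩ :=
    DistribLattice.prime_ideal_of_disjoint_filter_ideal
      (F := hGfilter.toPFilter) (I := hIideal.toIdeal) hdisj
  have hGcoe : (hGfilter.toPFilter : Set Ψ) = Gset := rfl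
  have hIcoe : (hIideal.toIdeal : Set Ψ) = Iset := rfl
  refine ⟨(J : Set Ψ), ⟨⟨J.nonempty, fun φ hφ ψ hle => J.lower hle hφ,
    fun φ hφ ψ hψ => J.sup_mem hφ hψ⟩, ?_, fun φ ψ hm => hJprime.mem_or_mem hm⟩, ?_, ?_⟩
  · -- proper
    intro huniv
    have : (⊤ : Ψ) ∈ (J : Set Ψ) := by rw [huniv]; trivial
    have htopG : (⊤ : Ψ) ∈ Gset := ⟨⊤, ⟨hE1, htopP⟩, le_rfl⟩
    exact Set.disjoint_left.mp hJdisj (by rw [hGcoe]; exact htopG) this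
  · -- R ∩ Fix = P ∩ Fix
    apply Set.Subset.antisymm
    · rintro x ⟨hxJ, hxF⟩
      refine ⟨?_, hxF⟩
      by_contra hxP
      have hxG : x ∈ Gset := ⟨x, ⟨hxF, hxP⟩, le_rfl⟩
      exact Set.disjoint_left.mp hJdisj (by rw [hGcoe]; exact hxG) hxJ
    · rintro x ⟨hxP, hxF⟩
      refine ⟨hIJ ?_, hxF⟩
      show x ∈ Iset
      exact ⟨⊥, hbotQ, x, ⟨hxP, hxF⟩, by simp⟩
  · -- Q ⊆ R
    intro q hq
    exact hIJ (show q ∈ Iset from ⟨q, hq, ⊥, ⟨hbotP, hbot⟩, by simp⟩)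
end

section
/- Let Ψ be a bounded distributive lattice and ε : Ψ → Ψ a distributive-lattice existential quantifier. If P is a prime ideal of Ψ and φ ∈ Ψ satisfies ε(φ) ∈ P, then there exists a prime ideal R of Ψ such that R ∩ Fix(ε) = P ∩ Fix(ε) and φ ∈ R. -/
theorem cignoli_lemma_two {Ψ : Type*} [DistribLattice Ψ] [BoundedOrder Ψ]
    (ε : Ψ → Ψ)
    (hE1 : ε ⊤ = ⊤)
    (hE2 : ∀ ψ : Ψ, ε ψ ≤ ψ)
    (hE3 : ∀ φ ψ : Ψ, ε (ε φ ⊔ ψ) = ε φ ⊔ ε ψ)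
    (hE4 : ∀ φ ψ : Ψ, ε (φ ⊓ ψ) = ε φ ⊓ ε ψ)
    (P : Set Ψ) (hP : IsPrimeIdealSet P) (φ : Ψ) (h : ε φ ∈ P) :
    ∃ R : Set Ψ, IsPrimeIdealSet R ∧
      R ∩ {ψ : Ψ | ε ψ = ψ} = P ∩ {ψ : Ψ | ε ψ = ψ} ∧ φ ∈ R := by
  obtain ⟨⟨⟨p0, hp0⟩, hPdown, hPsup⟩, hPproper, hPprime⟩ := hP
  -- ε is monotone
  have hmono : ∀ a b : Ψ, a ≤ b → ε a ≤ ε b := by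
    intro a b hab
    have : ε (a ⊓ b) = ε a ⊓ ε b := hE4 a b
    rw [inf_eq_left.mpr hab] at this
    exact le_of_eq_of_le this inf_le_right
  have hbotP : (⊥ : Ψ) ∈ P := hPdown p0 hp0 ⊥ bot_le
  have hbotFix : ε (⊥ : Ψ) = ⊥ := le_antisymm (hE2 ⊥) bot_le
  have htopP : (⊤ : Ψ) ∉ P := by
    intro ht
    apply hPproper
    ext x; simp only [Set.mem_univ, iff_true]
    exact hPdown ⊤ ht x le_top
  -- Fix closed under join
  have hFixSup : ∀ a b : Ψ, ε a = a → ε b = b → ε (a ⊔ b) = a ⊔ b := by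
    intro a b ha hb
    calc ε (a ⊔ b) = ε (ε a ⊔ b) := by rw [ha]
    _ = ε a ⊔ ε b := hE3 a b
    _ = a ⊔ b := by rw [ha, hb]
  -- the ideal I₀ generated by φ and P ∩ Fix
  set I0 : Set Ψ := {x | ∃ p ∈ P, ε p = p ∧ x ≤ φ ⊔ p} with hI0def
  have hI0 : Order.IsIdeal I0 := by
    constructor
    · intro a b hba ⟨p, hpP, hpF, hap⟩
      exact ⟨p, hpP, hpF, le_trans hba hap⟩
    · exact ⟨⊥, ⊥, hbotP, hbotFix, bot_le⟩
    · rintro x ⟨p, hpP, hpF, hx⟩ y ⟨q, hqP, hqF, hy⟩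
      refine ⟨x ⊔ y, ⟨p ⊔ q, hPsup p hpP q hqP, hFixSup p q hpF hqF, ?_⟩,
        le_sup_left, le_sup_right⟩
      exact sup_le (hx.trans (sup_le_sup_left le_sup_left φ))
        (hy.trans (sup_le_sup_left le_sup_right φ))
  -- the filter F₀ generated by Fix \ P
  set F0 : Set Ψ := {y | ∃ q : Ψ, ε q = q ∧ q ∉ P ∧ q ≤ y} with hF0def
  have hF0 : Order.IsPFilter F0 := by
    apply Order.IsPFilter.of_def
    · exact ⟨⊤, ⊤, hE1, htopP, le_refl _⟩
    · rintro x ⟨p, hpF, hpP, hpx⟩ y ⟨q, hqF, hqP, hqy⟩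
      refine ⟨p ⊓ q, ⟨p ⊓ q, by rw [hE4, hpF, hqF], ?_, le_refl _⟩,
        le_trans inf_le_left hpx, le_trans inf_le_right hqy⟩
      intro hmem
      rcases hPprime p q hmem with h' | h' <;> [exact hpP h'; exact hqP h']
    · rintro x y hxy ⟨q, hqF, hqP, hqx⟩
      exact ⟨q, hqF, hqP, hqx.trans hxy⟩
  -- disjointness of F₀ and I₀
  have hdisj : Disjoint (↑hF0.toPFilter : Set Ψ) (↑hI0.toIdeal : Set Ψ) := by
    rw [Set.disjoint_left]
    rintro x ⟨q, hqF, hqP, hqx⟩ ⟨p, hpP, hpF, hxp⟩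
    apply hqP
    have h1 : q ≤ φ ⊔ p := hqx.trans hxp
    have h2 : q ≤ ε (φ ⊔ p) := by
      calc q = ε q := hqF.symm
      _ ≤ ε (φ ⊔ p) := hmono _ _ h1
    have h3 : ε (φ ⊔ p) = ε φ ⊔ p := by
      calc ε (φ ⊔ p) = ε (p ⊔ φ) := by rw [sup_comm]
      _ = ε (ε p ⊔ φ) := by rw [hpF]
      _ = ε p ⊔ ε φ := hE3 p φ
      _ = ε φ ⊔ p := by rw [hpF, sup_comm]
    rw [h3] at h2
    exact hPdown _ (hPsup _ h _ hpP) q h2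
  obtain ⟨J, hJprime, hIJ, hJdisj⟩ :=
    DistribLattice.prime_ideal_of_disjoint_filter_ideal hdisj
  refine ⟨(J : Set Ψ), ⟨⟨J.nonempty, fun a ha b hba => J.lower hba ha,
    fun a ha b hb => J.sup_mem ha hb⟩, ?_, fun a b => hJprime.mem_or_mem⟩, ?_, ?_⟩
  · -- proper: ⊤ ∉ J since ⊤ ∈ F₀
    intro huniv
    have htopF : (⊤ : Ψ) ∈ hF0.toPFilter := ⟨⊤, hE1, htopP, le_refl _⟩
    have : (⊤ : Ψ) ∈ (J : Set Ψ) := by rw [huniv]; trivial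
    exact Set.disjoint_left.mp hJdisj htopF this
  · -- trace on Fix agrees
    ext x
    simp only [Set.mem_inter_iff, Set.mem_setOf_eq]
    constructor
    · rintro ⟨hxJ, hxF⟩
      refine ⟨?_, hxF⟩
      by_contra hxP
      have : x ∈ hF0.toPFilter := ⟨x, hxF, hxP, le_refl _⟩
      exact Set.disjoint_left.mp hJdisj this hxJ
    · rintro ⟨hxP, hxF⟩
      exact ⟨hIJ ⟨x, hxP, hxF, le_sup_right⟩, hxF⟩
  · exact hIJ ⟨⊥, hbotP, hbotFix, by simp⟩
end

section
/- Let Ψ be a bounded distributive lattice and ε : Ψ → Ψ a distributive-lattice existential quantifier. For φ ∈ Ψ let X_φ denote the set of prime ideals of Ψ containing φ, and for a set S of prime ideals let σ_ε(S) = {P prime ideal : ∃ Q ∈ S with Q ∩ Fix(ε) = P ∩ Fix(ε)}. Then for every φ ∈ Ψ: X_{ε(φ)} = σ_ε(X_φ). -/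
/-- `X φ` : the set of prime ideals containing `φ`. -/
def primeIdealsContaining {Ψ : Type*} [Lattice Ψ] (φ : Ψ) : Set (Set Ψ) :=
  {P | IsPrimeIdealSet P ∧ φ ∈ P}

/-- The saturation operator on sets of prime ideals induced by the
equivalence `P ≡ Q` iff `P ∩ Fix(ε) = Q ∩ Fix(ε)`. -/
def primeSaturate {Ψ : Type*} [Lattice Ψ] (ε : Ψ → Ψ) (S : Set (Set Ψ)) :
    Set (Set Ψ) :=
  {P | IsPrimeIdealSet P ∧
    ∃ Q ∈ S, Q ∩ {ψ : Ψ | ε ψ = ψ} = P ∩ {ψ : Ψ | ε ψ = ψ}}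

theorem extraction_as_saturation_of_primes {Ψ : Type*} [DistribLattice Ψ]
    [BoundedOrder Ψ] (ε : Ψ → Ψ)
    (hE1 : ε ⊤ = ⊤)
    (hE2 : ∀ ψ : Ψ, ε ψ ≤ ψ)
    (hE3 : ∀ φ ψ : Ψ, ε (ε φ ⊔ ψ) = ε φ ⊔ ε ψ)
    (hE4 : ∀ φ ψ : Ψ, ε (φ ⊓ ψ) = ε φ ⊓ ε ψ) :
    ∀ φ : Ψ, primeIdealsContaining (ε φ) = primeSaturate ε (primeIdealsContaining φ) := by

  intro φ
  -- basic facts about ε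
  have hmono : ∀ a b : Ψ, a ≤ b → ε a ≤ ε b := by
    intro a b hab
    have : ε (a ⊓ b) = ε a ⊓ ε b := hE4 a b
    rw [inf_eq_left.mpr hab] at this
    rw [this]; exact inf_le_right
  have hidem : ∀ a : Ψ, ε (ε a) = ε a := by
    intro a
    have h := hE3 a (ε a)
    rw [sup_idem] at h
    exact le_antisymm (hE2 _) (by rw [h]; exact le_sup_left)
  have hfixsup : ∀ a b : Ψ, ε a = a → ε b = b → ε (a ⊔ b) = a ⊔ b := by
    intro a b ha hb
    conv_lhs => rw [← ha, hE3, ha, hb]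
  have hbot : ε (⊥ : Ψ) = ⊥ := le_antisymm (hE2 _) bot_le
  ext P
  constructor
  · -- hard direction
    rintro ⟨hP, hεφP⟩
    obtain ⟨⟨⟨x, hx⟩, hdown, hjoin⟩, hproper, hprime⟩ := id hP
    have hbotP : (⊥ : Ψ) ∈ P := hdown x hx ⊥ bot_le
    have htopP : (⊤ : Ψ) ∉ P := by
      intro h
      exact hproper (Set.eq_univ_of_forall fun y => hdown ⊤ h y le_top)
    -- the ideal generated by (P ∩ Fix) ∪ {φ}
    have hI : Order.IsIdeal {ψ : Ψ | ∃ a, a ∈ P ∧ ε a = a ∧ ψ ≤ a ⊔ φ} := by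
      constructor
      · intro u v huv ⟨a, haP, hafix, hva⟩
        exact ⟨a, haP, hafix, le_trans huv hva⟩
      · exact ⟨⊥, ⊥, hbotP, hbot, bot_le⟩
      · rintro u ⟨a, haP, hafix, hua⟩ v ⟨b, hbP, hbfix, hvb⟩
        refine ⟨u ⊔ v, ⟨a ⊔ b, hjoin a haP b hbP, hfixsup a b hafix hbfix, ?_⟩,
          le_sup_left, le_sup_right⟩
        calc u ⊔ v ≤ (a ⊔ φ) ⊔ (b ⊔ φ) := sup_le_sup hua hvb
        _ = a ⊔ b ⊔ φ := by rw [sup_sup_sup_comm, sup_idem]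
    -- the filter generated by Fix \ P
    have hF : Order.IsPFilter {ψ : Ψ | ∃ b, ε b = b ∧ b ∉ P ∧ b ≤ ψ} := by
      apply Order.IsPFilter.of_def
      · exact ⟨⊤, ⊤, hE1, htopP, le_refl _⟩
      · rintro u ⟨a, hafix, haP, hau⟩ v ⟨b, hbfix, hbP, hbv⟩
        refine ⟨a ⊓ b, ⟨a ⊓ b, by rw [hE4, hafix, hbfix], ?_, le_refl _⟩,
          le_trans inf_le_left hau, le_trans inf_le_right hbv⟩
        intro hmem
        rcases hprime a b hmem with h | h
        · exact haP h
        · exact hbP h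
      · rintro u v huv ⟨b, hbfix, hbP, hbu⟩
        exact ⟨b, hbfix, hbP, le_trans hbu huv⟩
    -- the filter and ideal are disjoint
    have hdisj : Disjoint ((hF.toPFilter : Order.PFilter Ψ) : Set Ψ)
        ((hI.toIdeal : Order.Ideal Ψ) : Set Ψ) := by
      rw [Set.disjoint_left]
      rintro ψ ⟨b, hbfix, hbP, hbψ⟩ ⟨a, haP, hafix, hψa⟩
      apply hbP
      have hb : b = (b ⊓ a) ⊔ (b ⊓ φ) := by
        rw [← inf_sup_left, inf_eq_left.mpr (le_trans hbψ hψa)]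
      have hb2 : b = (b ⊓ a) ⊔ (b ⊓ ε φ) := by
        conv_lhs => rw [← hbfix, hb]
        have hba : ε (b ⊓ a) = b ⊓ a := by rw [hE4, hbfix, hafix]
        rw [← hba, hE3, hba, hE4, hbfix]
      rw [hb2]
      exact hjoin _ (hdown a haP _ inf_le_right) _ (hdown (ε φ) hεφP _ inf_le_right)
    obtain ⟨J, hJprime, hIJ, hJF⟩ :=
      DistribLattice.prime_ideal_of_disjoint_filter_ideal hdisj
    refine ⟨hP,
      ⟨(J : Set Ψ), ⟨⟨⟨⟨⊥, J.bot_mem⟩, fun a ha b hba => J.lower hba ha,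
        fun a ha b hb => J.sup_mem ha hb⟩, ?_, fun a b => hJprime.mem_or_mem⟩, ?_⟩, ?_⟩⟩
    · intro h
      have : (⊤ : Ψ) ∈ (J : Set Ψ) := by rw [h]; trivial
      exact Set.disjoint_left.mp hJF Order.PFilter.top_mem this
    · exact hIJ ⟨⊥, hbotP, hbot, by simp⟩
    · ext c
      constructor
      · rintro ⟨hcJ, hcfix⟩
        refine ⟨?_, hcfix⟩
        by_contra hcP
        exact Set.disjoint_left.mp hJF ⟨c, hcfix, hcP, le_refl c⟩ hcJ
      · rintro ⟨hcP, hcfix⟩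
        exact ⟨hIJ ⟨c, hcP, hcfix, le_sup_left⟩, hcfix⟩
  · -- easy direction
    rintro ⟨hP, Q, ⟨hQ, hφQ⟩, hQP⟩
    refine ⟨hP, ?_⟩
    have hεφQ : ε φ ∈ Q := hQ.1.2.1 φ hφQ (ε φ) (hE2 φ)
    have : ε φ ∈ Q ∩ {ψ : Ψ | ε ψ = ψ} := ⟨hεφQ, hidem φ⟩
    rw [hQP] at this
    exact this.1
end

section
/- Let (D, ≤) be a lattice and define x ⊥_L y | z to hold if and only if (x ∨ z) ∧ (y ∨ z) = z. Then ⊥_L is a quasi-separoid, i.e. it satisfies: C1: x ⊥_L y | y for all x, y; C2: x ⊥_L y | z implies y ⊥_L x | z; C3: x ⊥_L y | z and w ≤ y imply x ⊥_L w | z; C4: x ⊥_L y | z implies x ⊥_L (y ∨ z) | z. -/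
/-- The lattice conditional independence relation:
`x ⊥_L y | z` iff `(x ⊔ z) ⊓ (y ⊔ z) = z`. -/
def perpL {D : Type*} [Lattice D] (x y z : D) : Prop :=
  (x ⊔ z) ⊓ (y ⊔ z) = z

theorem perpL_quasiSeparoid {D : Type*} [Lattice D] :
    -- C1
    (∀ x y : D, perpL x y y) ∧
    -- C2
    (∀ x y z : D, perpL x y z → perpL y x z) ∧
    -- C3
    (∀ x y z w : D, perpL x y z → w ≤ y → perpL x w z) ∧
    -- C4
    (∀ x y z : D, perpL x y z → perpL x (y ⊔ z) z) := by
  refine ⟨fun x y => ?_, fun x y z h => ?_, fun x y z w h hw => ?_, fun x y z h => ?_⟩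
  · simp [perpL]
  · unfold perpL at *; rw [inf_comm]; exact h
  · unfold perpL at *
    apply le_antisymm
    · calc (x ⊔ z) ⊓ (w ⊔ z) ≤ (x ⊔ z) ⊓ (y ⊔ z) :=
            inf_le_inf_left _ (sup_le_sup_right hw _)
        _ = z := h
    · exact le_inf le_sup_right le_sup_right
  · unfold perpL at *
    rw [sup_assoc, sup_idem] at *
    exact h
end

section
/- Let (D, ≤) be a lattice and ⊥̇ a ternary relation on D satisfying the quasi-separoid axioms C1–C4. Then ⊥̇ is basic, i.e. x ⊥̇ x | y implies x ≤ y for all x, y, if and only if for all x, y, z: x ⊥̇ y | z implies (x ∨ z) ∧ (y ∨ z) = z. -/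
theorem basic_qseparoid_characterisation {D : Type*} [Lattice D]
    (ci : D → D → D → Prop)
    (hC1 : ∀ x y : D, ci x y y)
    (hC2 : ∀ x y z : D, ci x y z → ci y x z)
    (hC3 : ∀ x y z w : D, ci x y z → w ≤ y → ci x w z)
    (hC4 : ∀ x y z : D, ci x y z → ci x (y ⊔ z) z) :
    (∀ x y : D, ci x x y → x ≤ y) ↔
      (∀ x y z : D, ci x y z → (x ⊔ z) ⊓ (y ⊔ z) = z) := by
  constructor
  · intro hb x y z h
    set w := (x ⊔ z) ⊓ (y ⊔ z) with hw
    have h1 := hC4 x y z h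
    have h2 := hC2 _ _ _ h1
    have h3 := hC4 _ _ _ h2
    have h4 := hC2 _ _ _ h3
    have h5 := hC3 _ _ _ w h4 inf_le_right
    have h6 := hC2 _ _ _ h5
    have h7 := hC3 _ _ _ w h6 inf_le_left
    have hle : w ≤ z := hb _ _ h7
    exact le_antisymm hle (le_inf le_sup_right le_sup_right)
  · intro hc x y h
    have := hc x x y h
    simpa [inf_idem] using (sup_eq_right.mp (by simpa [inf_idem] using this))
end

section
/- Let (D, ≤) be a distributive lattice and define x ⊥_L y | z to hold if and only if (x ∨ z) ∧ (y ∨ z) = z. Then ⊥_L is a strong separoid: it satisfies C1–C6 and additionally C7: if z ≤ y, w ≤ y, x ⊥_L y | z and x ⊥_L y | w, then x ⊥_L y | (z ∧ w). -/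
theorem perpL_strong_separoid_of_distrib {D : Type*} [DistribLattice D] :
    -- C1
    (∀ x y : D, perpL x y y) ∧
    -- C2
    (∀ x y z : D, perpL x y z → perpL y x z) ∧
    -- C3
    (∀ x y z w : D, perpL x y z → w ≤ y → perpL x w z) ∧
    -- C4
    (∀ x y z : D, perpL x y z → perpL x (y ⊔ z) z) ∧
    -- C5
    (∀ x y z w : D, perpL x y z → w ≤ y → perpL x y (z ⊔ w)) ∧
    -- C6
    (∀ x y z w : D, perpL x y z → perpL x w (y ⊔ z) → perpL x (y ⊔ w) z) ∧
    -- C7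
    (∀ x y z w : D, z ≤ y → w ≤ y → perpL x y z → perpL x y w →
      perpL x y (z ⊓ w)) := by
  refine ⟨?_, ?_, ?_, ?_, ?_, ?_, ?_⟩
  · intro x y
    simp [perpL]
  · intro x y z h
    unfold perpL at *
    rw [inf_comm]; exact h
  · intro x y z w h hw
    unfold perpL at *
    refine le_antisymm ?_ (le_inf le_sup_right le_sup_right)
    calc (x ⊔ z) ⊓ (w ⊔ z) ≤ (x ⊔ z) ⊓ (y ⊔ z) :=
          inf_le_inf_left _ (sup_le_sup_right hw z)
      _ = z := h
  · intro x y z h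
    unfold perpL at *
    rw [sup_assoc, sup_idem]; exact h
  · intro x y z w h hw
    unfold perpL at *
    have hy : y ⊔ (z ⊔ w) = y ⊔ z := by
      rw [← sup_assoc, sup_comm y z, sup_assoc, sup_eq_left.mpr hw]
    rw [hy, ← sup_assoc, inf_sup_right, h,
        inf_eq_left.mpr (le_sup_of_le_left hw)]
  · intro x y z w h1 h2
    unfold perpL at *
    refine le_antisymm ?_ (le_inf le_sup_right le_sup_right)
    have h3 : (x ⊔ z) ⊓ (y ⊔ w ⊔ z) ≤ y ⊔ z := by
      calc (x ⊔ z) ⊓ (y ⊔ w ⊔ z) ≤ (x ⊔ (y ⊔ z)) ⊓ (w ⊔ (y ⊔ z)) := by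
            apply inf_le_inf
            · exact sup_le_sup_left le_sup_right x
            · rw [sup_comm y w, sup_assoc]
        _ = y ⊔ z := h2
    calc (x ⊔ z) ⊓ (y ⊔ w ⊔ z) ≤ (x ⊔ z) ⊓ (y ⊔ z) :=
          le_inf inf_le_left h3
      _ = z := h1
  · intro x y z w hz hw h1 h2
    unfold perpL at *
    rw [sup_eq_left.mpr hz] at h1
    rw [sup_eq_left.mpr hw] at h2
    have hy : y ⊔ z ⊓ w = y := sup_eq_left.mpr (le_trans inf_le_left hz)
    have key : ((x ⊔ z) ⊓ y) ⊓ ((x ⊔ w) ⊓ y) = z ⊓ w := by rw [h1, h2]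
    rw [hy, sup_inf_left, ← key]
    ac_rfl
end
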